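/- arXiv:2006.09659 — 10 statements merged into one kernel-verified Lean document; each statement's English description precedes it below -/
import Mathlib

section
/- Let p be a prime and a, b be positive integers with gcd(p, ab) = 1 and p^2 ≡ 1 (mod b). Define C = a(p^2-1)/b - p·⌊ap/b⌋ (an integer). Then x₀ = C - p·⌊C/p⌋ is the unique integer with 0 ≤ x₀ ≤ p-1 satisfying b·x₀ ≡ -a (mod p). -/
/-- Lemma 4.2 (first part): for `p` prime, `a b > 0` with `gcd(p, ab) = 1` and
`p² ≡ 1 (mod b)`, setting `C = a(p²-1)/b - p⌊ap/b⌋`, the number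
`x₀ = C - p⌊C/p⌋` is the unique integer in `[0, p-1]` with `b·x₀ ≡ -a (mod p)`. -/
theorem stmt_0 (p a b : ℕ) (hp : p.Prime) (ha : 0 < a) (hb : 0 < b)
    (hcop : Nat.gcd p (a * b) = 1) (hdvd : (b : ℤ) ∣ (p : ℤ) ^ 2 - 1)
    (C x₀ : ℤ)
    (hC : C = (a : ℤ) * ((p : ℤ) ^ 2 - 1) / b - p * ((a * p : ℤ) / b))
    (hx₀ : x₀ = C - p * Int.fdiv C p) :
    (0 ≤ x₀ ∧ x₀ ≤ (p : ℤ) - 1 ∧ (b : ℤ) * x₀ ≡ -(a : ℤ) [ZMOD (p : ℤ)]) ∧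
      ∀ y : ℤ, 0 ≤ y → y ≤ (p : ℤ) - 1 → (b : ℤ) * y ≡ -(a : ℤ) [ZMOD (p : ℤ)] → y = x₀ := by
  have hppos : (0 : ℤ) < (p : ℤ) := by exact_mod_cast hp.pos
  have hx : x₀ = C % (p : ℤ) := by
    rw [hx₀, Int.fdiv_eq_ediv_of_nonneg _ hppos.le, Int.emod_def]
  have h0 : 0 ≤ x₀ := hx ▸ Int.emod_nonneg C hppos.ne'
  have hlt : x₀ < (p : ℤ) := hx ▸ Int.emod_lt_of_pos C hppos
  -- b * C = a * (p^2 - 1) - p * (b * ((a*p)/b))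
  have hbC : (b : ℤ) * C = (a : ℤ) * ((p : ℤ) ^ 2 - 1) - (p : ℤ) * ((b : ℤ) * ((a * p : ℤ) / b)) := by
    have hdvd' : (b : ℤ) ∣ (a : ℤ) * ((p : ℤ) ^ 2 - 1) := Dvd.dvd.mul_left hdvd _
    rw [hC, mul_sub, Int.mul_ediv_cancel' hdvd']
    ring
  have hmod : (b : ℤ) * C ≡ -(a : ℤ) [ZMOD (p : ℤ)] := by
    have : (p : ℤ) ∣ (b : ℤ) * C - (-(a : ℤ)) := by
      have : (b : ℤ) * C - (-(a : ℤ)) =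
          (p : ℤ) * ((a : ℤ) * p - (b : ℤ) * ((a * p : ℤ) / b)) := by
        rw [hbC]; ring
      rw [this]; exact Dvd.intro _ rfl
    exact (Int.modEq_iff_dvd.mpr (by simpa using this)).symm
  have hx₀mod : (b : ℤ) * x₀ ≡ -(a : ℤ) [ZMOD (p : ℤ)] := by
    have : x₀ ≡ C [ZMOD (p : ℤ)] := by
      rw [hx]; show C % (p:ℤ) % (p:ℤ) = C % (p:ℤ); exact Int.emod_emod_of_dvd C dvd_rfl
    exact (Int.ModEq.mul_left (b : ℤ) this).trans hmod
  have hgcd : Int.gcd (p : ℤ) (b : ℤ) = 1 := by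
    have : Nat.Coprime p b := Nat.Coprime.coprime_dvd_right ⟨a, by ring⟩ hcop
    simpa [Int.gcd_natCast_natCast] using this
  refine ⟨⟨h0, by omega, hx₀mod⟩, fun y hy0 hy1 hymod => ?_⟩
  have hyx : y ≡ x₀ [ZMOD (p : ℤ)] := by
    have := Int.ModEq.cancel_left_div_gcd hppos (hymod.trans hx₀mod.symm)
    rwa [hgcd, Nat.cast_one, Int.ediv_one] at this
  have : y % (p : ℤ) = x₀ % (p : ℤ) := hyx
  rwa [Int.emod_eq_of_lt hy0 (by omega), Int.emod_eq_of_lt h0 hlt] at this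
end

section
/- Let p be a prime and a, b be positive integers with gcd(p, ab) = 1, p^2 ≡ 1 (mod b), and a < b. Then C = a(p^2-1)/b - p·⌊ap/b⌋ satisfies 0 ≤ C ≤ p-1, and hence C itself is the least nonnegative solution of b·x ≡ -a (mod p). -/
/-- Lemma 4.2 (second part): if moreover `a < b`, then
`C = a(p²-1)/b - p⌊ap/b⌋` itself satisfies `0 ≤ C ≤ p-1` and is the least
nonnegative solution of `b·x ≡ -a (mod p)`. -/
theorem stmt_1 (p a b : ℕ) (hp : p.Prime) (ha : 0 < a) (hb : 0 < b)
    (hcop : Nat.gcd p (a * b) = 1) (hdvd : (b : ℤ) ∣ (p : ℤ) ^ 2 - 1) (hab : a < b)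
    (C : ℤ) (hC : C = (a : ℤ) * ((p : ℤ) ^ 2 - 1) / b - p * ((a * p : ℤ) / b)) :
    (0 ≤ C ∧ C ≤ (p : ℤ) - 1 ∧ (b : ℤ) * C ≡ -(a : ℤ) [ZMOD (p : ℤ)]) ∧
      ∀ y : ℤ, 0 ≤ y → (b : ℤ) * y ≡ -(a : ℤ) [ZMOD (p : ℤ)] → C ≤ y := by
  have hbZ : (0:ℤ) < b := by exact_mod_cast hb
  have hp2 : 2 ≤ (p:ℤ) := by exact_mod_cast hp.two_le
  have hcopp : Nat.Coprime p b := (Nat.coprime_mul_iff_right.mp hcop).2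
  have hcopa : Nat.Coprime p a := (Nat.coprime_mul_iff_right.mp hcop).1
  set q : ℤ := (a * p : ℤ) / b with hq
  set r : ℤ := (a * p : ℤ) % b with hr
  have hqr : (a:ℤ) * p = b * q + r := (Int.mul_ediv_add_emod _ _).symm
  have hr0 : 0 ≤ r := Int.emod_nonneg _ (ne_of_gt hbZ)
  have hrb : r < b := Int.emod_lt_of_pos _ hbZ
  have hdvd' : (b:ℤ) ∣ (a:ℤ) * ((p:ℤ)^2 - 1) := Dvd.dvd.mul_left hdvd _
  have key : (b:ℤ) * C = p * r - a := by
    rw [hC, mul_sub, Int.mul_ediv_cancel' hdvd']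
    have : (b:ℤ) * ((p:ℤ) * q) = p * (a * p - r) := by
      rw [show (a:ℤ) * p - r = b * q by linarith]; ring
    nlinarith [this]
  have hr1 : 1 ≤ r := by
    rcases lt_or_eq_of_le hr0 with h | h
    · linarith
    · exfalso
      have hba : (b:ℤ) ∣ (a:ℤ) * p := ⟨q, by linarith⟩
      have hba' : b ∣ a * p := by exact_mod_cast hba
      have : b ∣ a := (Nat.Coprime.dvd_of_dvd_mul_right (hcopp.symm) hba')
      exact absurd (Nat.le_of_dvd ha this) (not_le.mpr hab)
  have hC0 : 0 ≤ C := by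
    by_contra h
    push_neg at h
    have hCle : C ≤ -1 := by linarith
    nlinarith [key, hr1, hp2, (show (a:ℤ) < b by exact_mod_cast hab)]
  have hCp : C ≤ (p:ℤ) - 1 := by
    by_contra h
    push_neg at h
    have hCge : (p:ℤ) ≤ C := by linarith
    nlinarith [key, hrb, hp2, (show (0:ℤ) < a by exact_mod_cast ha)]
  have hmod : (b:ℤ) * C ≡ -(a:ℤ) [ZMOD (p:ℤ)] := by
    have : (p:ℤ) ∣ -(a:ℤ) - (b:ℤ) * C := ⟨-r, by linarith⟩
    exact (Int.modEq_iff_dvd.mpr this)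
  refine ⟨⟨hC0, hCp, hmod⟩, ?_⟩
  intro y hy hymod
  by_contra h
  push_neg at h
  have hpZ : Prime (p:ℤ) := Nat.prime_iff_prime_int.mp hp
  have hcy : (b:ℤ) * C ≡ (b:ℤ) * y [ZMOD (p:ℤ)] := hmod.trans hymod.symm
  have hdiff : (p:ℤ) ∣ (b:ℤ) * (y - C) := by
    have := Int.ModEq.dvd hcy
    simpa [mul_sub] using this
  have hnb : ¬ (p:ℤ) ∣ (b:ℤ) := by
    intro hd
    have hd' : p ∣ b := by exact_mod_cast hd
    have : p = 1 := Nat.eq_one_of_dvd_coprimes hcopp (dvd_refl p) hd'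
    exact hp.one_lt.ne' this
  have hyc : (p:ℤ) ∣ y - C := (hpZ.dvd_mul.mp hdiff).resolve_left hnb
  have hyc' : (p:ℤ) ∣ C - y := by simpa using (dvd_neg.mpr hyc)
  have : (p:ℤ) ≤ C - y := Int.le_of_dvd (by linarith) hyc'
  linarith
end

section
/- For any natural number t ≥ 2, an odd prime p coprime to 3 satisfies p^2 ≡ 1 (mod 3·2^(t+2)) if and only if p is congruent modulo 3·2^(t+1) to one of: 1, 3·2^(t+1) - 1, r₁(t), or r₂(t), where r₁(t) = 2^(t+1) - 1 if t is even and 2^(t+1) + 1 if t is odd, and r₂(t) = 2^(t+2) + 1 if t is even and 2^(t+2) - 1 if t is odd. -/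
/-- Lemma 4.5: for `t ≥ 2` and a prime `p ≥ 5`, one has `p² ≡ 1 (mod 3·2^(t+2))`
iff `p` lies, modulo `3·2^(t+1)`, in one of the residue classes
`1`, `3·2^(t+1) - 1`, `r₁(t)`, `r₂(t)`. -/
theorem stmt_2 (t p : ℕ) (ht : 2 ≤ t) (hp : p.Prime) (hp5 : 5 ≤ p) :
    (p : ℤ) ^ 2 ≡ 1 [ZMOD (3 * 2 ^ (t + 2) : ℤ)] ↔
      ((p : ℤ) ≡ 1 [ZMOD (3 * 2 ^ (t + 1) : ℤ)] ∨
        (p : ℤ) ≡ 3 * 2 ^ (t + 1) - 1 [ZMOD (3 * 2 ^ (t + 1) : ℤ)] ∨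
        (p : ℤ) ≡ (if Even t then 2 ^ (t + 1) - 1 else 2 ^ (t + 1) + 1)
          [ZMOD (3 * 2 ^ (t + 1) : ℤ)] ∨
        (p : ℤ) ≡ (if Even t then 2 ^ (t + 2) + 1 else 2 ^ (t + 2) - 1)
          [ZMOD (3 * 2 ^ (t + 1) : ℤ)]) := by
  have hpodd : Odd p := hp.odd_of_ne_two (by omega)
  obtain ⟨k', hk'⟩ := hpodd
  set P : ℤ := (p : ℤ) with hPdef
  set k : ℤ := (k' : ℤ) with hkdef
  have hk : P = 2 * k + 1 := by rw [hPdef, hkdef, hk']; push_cast; ring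
  set K : ℤ := 2 ^ t with hKdef
  have e1 : (2 : ℤ) ^ (t + 1) = 2 * K := by rw [hKdef, pow_succ]; ring
  have e2 : (2 : ℤ) ^ (t + 2) = 4 * K := by rw [hKdef, pow_add]; ring
  -- the residue of K = 2^t mod 3 according to parity of t
  have h3K : (Even t ∧ ∃ m : ℤ, K = 3 * m + 1) ∨ (¬ Even t ∧ ∃ m : ℤ, K = 3 * m + 2) := by
    have hd : (3 : ℤ) ∣ 2 ^ t - (-1) ^ t := by
      have h := sub_dvd_pow_sub_pow (2 : ℤ) (-1) t
      norm_num at h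
      exact h
    rcases Nat.even_or_odd t with h | h
    · left
      refine ⟨h, ?_⟩
      rw [h.neg_one_pow] at hd
      obtain ⟨m, hm⟩ := hd
      exact ⟨m, by rw [hKdef]; linarith⟩
    · right
      refine ⟨(Nat.not_even_iff_odd).mpr h, ?_⟩
      rw [h.neg_one_pow] at hd
      obtain ⟨m, hm⟩ := hd
      exact ⟨m - 1, by rw [hKdef]; linarith⟩
  -- coprimality of 3 and 2*K
  have hcop : IsCoprime (3 : ℤ) (2 * K) := by
    have h32 : IsCoprime (3 : ℤ) 2 := by norm_num
    have := h32.pow_right (n := t + 1)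
    rwa [e1] at this
  -- rewrite the goal in terms of divisibility
  have goal1 : ((P : ℤ) ^ 2 ≡ 1 [ZMOD (3 * 2 ^ (t + 2) : ℤ)]) ↔ 3 * (4 * K) ∣ P ^ 2 - 1 := by
    rw [Int.modEq_iff_dvd, e2]
    exact dvd_sub_comm
  have goalc : ∀ c : ℤ, ((P : ℤ) ≡ c [ZMOD (3 * 2 ^ (t + 1) : ℤ)]) ↔ 3 * (2 * K) ∣ P - c := by
    intro c
    rw [Int.modEq_iff_dvd, e1]
    exact dvd_sub_comm
  rw [goal1]
  simp only [goalc]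
  -- splitting lemma (forward direction)
  have hsplit : 3 * (4 * K) ∣ P ^ 2 - 1 →
      ((2 * K ∣ P - 1 ∨ 2 * K ∣ P + 1) ∧ ((3 : ℤ) ∣ P - 1 ∨ (3 : ℤ) ∣ P + 1)) := by
    intro h
    have e : P ^ 2 - 1 = 4 * (k * (k + 1)) := by rw [hk]; ring
    rw [e, show (3 : ℤ) * (4 * K) = 4 * (3 * K) from by ring] at h
    have h' : 3 * K ∣ k * (k + 1) :=
      (mul_dvd_mul_iff_left (by norm_num : (4 : ℤ) ≠ 0)).mp h
    have h3 : (3 : ℤ) ∣ k * (k + 1) := dvd_trans (dvd_mul_right 3 K) h'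
    have hKd : K ∣ k * (k + 1) := dvd_trans (dvd_mul_left K 3) h'
    constructor
    · rcases Int.even_or_odd k with he | ho
      · left
        have hno : ¬ (2 : ℤ) ∣ (k + 1) := by
          obtain ⟨c, hc⟩ := he
          rintro ⟨d, hd⟩
          omega
        have hKk : K ∣ k := by
          rw [hKdef]
          exact Int.prime_two.pow_dvd_of_dvd_mul_right t hno (by rwa [hKdef] at hKd)
        obtain ⟨a, ha⟩ := hKk
        exact ⟨a, by rw [hk, ha]; ring⟩
      · right
        have hno : ¬ (2 : ℤ) ∣ k := by
          obtain ⟨c, hc⟩ := ho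
          rintro ⟨d, hd⟩
          omega
        have hKk : K ∣ k + 1 := by
          rw [hKdef]
          exact Int.prime_two.pow_dvd_of_dvd_mul_left t hno (by rwa [hKdef] at hKd)
        obtain ⟨a, ha⟩ := hKk
        exact ⟨a, by rw [hk]; linarith [ha]⟩
    · rcases (Int.prime_three.dvd_mul).mp h3 with h | h
      · left
        obtain ⟨a, ha⟩ := h
        exact ⟨2 * a, by rw [hk, ha]; ring⟩
      · right
        obtain ⟨a, ha⟩ := h
        exact ⟨2 * a, by rw [hk]; linarith [ha]⟩
  -- reverse helper
  have hrev : ∀ c : ℤ, Odd c → 3 * (2 * K) ∣ P - c → 3 * (4 * K) ∣ P ^ 2 - c ^ 2 := by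
    intro c hc hdvd
    obtain ⟨a, ha⟩ := hdvd
    have hPc : ∃ b : ℤ, P + c = 2 * b := by
      obtain ⟨d, hd⟩ := hc
      exact ⟨k + d + 1, by rw [hk, hd]; ring⟩
    obtain ⟨b', hb'⟩ := hPc
    exact ⟨a * b', by linear_combination (P + c) * ha + (3 * (2 * K) * a) * hb'⟩
  rcases h3K with ⟨hev, m, hm⟩ | ⟨hev, m, hm⟩
  · -- t even, K = 3m + 1
    rw [if_pos hev, if_pos hev, e1, e2]
    constructor
    · intro h
      obtain ⟨h2c, h3c⟩ := hsplit h
      rcases h2c with ⟨a, ha⟩ | ⟨a, ha⟩ <;> rcases h3c with ⟨b, hb⟩ | ⟨b, hb⟩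
      · exact Or.inl (hcop.mul_dvd ⟨b, hb⟩ ⟨a, ha⟩)
      · refine Or.inr (Or.inr (Or.inr (hcop.mul_dvd ?_ ?_)))
        · exact ⟨b - 4 * m - 2, by linear_combination hb - 4 * hm⟩
        · exact ⟨a - 2, by linear_combination ha⟩
      · refine Or.inr (Or.inr (Or.inl (hcop.mul_dvd ?_ ?_)))
        · exact ⟨b - 2 * m, by linear_combination hb - 2 * hm⟩
        · exact ⟨a - 1, by linear_combination ha⟩
      · refine Or.inr (Or.inl (hcop.mul_dvd ?_ ?_))
        · exact ⟨b - 2 * K, by linear_combination hb⟩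
        · exact ⟨a - 3, by linear_combination ha⟩
    · rintro (h | h | h | h)
      · have h1 := hrev 1 ⟨0, by ring⟩ h
        have h2 : 3 * (4 * K) ∣ (1 : ℤ) ^ 2 - 1 := ⟨0, by ring⟩
        have e : P ^ 2 - 1 = (P ^ 2 - 1 ^ 2) + ((1 : ℤ) ^ 2 - 1) := by ring
        rw [e]; exact dvd_add h1 h2
      · have h1 := hrev (3 * (2 * K) - 1) ⟨3 * K - 1, by ring⟩ h
        have h2 : 3 * (4 * K) ∣ (3 * (2 * K) - 1) ^ 2 - 1 := ⟨3 * K - 1, by ring⟩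
        have e : P ^ 2 - 1 = (P ^ 2 - (3 * (2 * K) - 1) ^ 2) + ((3 * (2 * K) - 1) ^ 2 - 1) := by
          ring
        rw [e]; exact dvd_add h1 h2
      · have h1 := hrev (2 * K - 1) ⟨K - 1, by ring⟩ h
        have h2 : 3 * (4 * K) ∣ (2 * K - 1) ^ 2 - 1 := ⟨m, by linear_combination (4 * K) * hm⟩
        have e : P ^ 2 - 1 = (P ^ 2 - (2 * K - 1) ^ 2) + ((2 * K - 1) ^ 2 - 1) := by ring
        rw [e]; exact dvd_add h1 h2
      · have h1 := hrev (4 * K + 1) ⟨2 * K, by ring⟩ h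
        have h2 : 3 * (4 * K) ∣ (4 * K + 1) ^ 2 - 1 :=
          ⟨4 * m + 2, by linear_combination (16 * K) * hm⟩
        have e : P ^ 2 - 1 = (P ^ 2 - (4 * K + 1) ^ 2) + ((4 * K + 1) ^ 2 - 1) := by ring
        rw [e]; exact dvd_add h1 h2
  · -- t odd, K = 3m + 2
    rw [if_neg hev, if_neg hev, e1, e2]
    constructor
    · intro h
      obtain ⟨h2c, h3c⟩ := hsplit h
      rcases h2c with ⟨a, ha⟩ | ⟨a, ha⟩ <;> rcases h3c with ⟨b, hb⟩ | ⟨b, hb⟩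
      · exact Or.inl (hcop.mul_dvd ⟨b, hb⟩ ⟨a, ha⟩)
      · refine Or.inr (Or.inr (Or.inl (hcop.mul_dvd ?_ ?_)))
        · exact ⟨b - 2 * m - 2, by linear_combination hb - 2 * hm⟩
        · exact ⟨a - 1, by linear_combination ha⟩
      · refine Or.inr (Or.inr (Or.inr (hcop.mul_dvd ?_ ?_)))
        · exact ⟨b - 4 * m - 2, by linear_combination hb - 4 * hm⟩
        · exact ⟨a - 2, by linear_combination ha⟩
      · refine Or.inr (Or.inl (hcop.mul_dvd ?_ ?_))
        · exact ⟨b - 2 * K, by linear_combination hb⟩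
        · exact ⟨a - 3, by linear_combination ha⟩
    · rintro (h | h | h | h)
      · have h1 := hrev 1 ⟨0, by ring⟩ h
        have h2 : 3 * (4 * K) ∣ (1 : ℤ) ^ 2 - 1 := ⟨0, by ring⟩
        have e : P ^ 2 - 1 = (P ^ 2 - 1 ^ 2) + ((1 : ℤ) ^ 2 - 1) := by ring
        rw [e]; exact dvd_add h1 h2
      · have h1 := hrev (3 * (2 * K) - 1) ⟨3 * K - 1, by ring⟩ h
        have h2 : 3 * (4 * K) ∣ (3 * (2 * K) - 1) ^ 2 - 1 := ⟨3 * K - 1, by ring⟩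
        have e : P ^ 2 - 1 = (P ^ 2 - (3 * (2 * K) - 1) ^ 2) + ((3 * (2 * K) - 1) ^ 2 - 1) := by
          ring
        rw [e]; exact dvd_add h1 h2
      · have h1 := hrev (2 * K + 1) ⟨K, by ring⟩ h
        have h2 : 3 * (4 * K) ∣ (2 * K + 1) ^ 2 - 1 :=
          ⟨m + 1, by linear_combination (4 * K) * hm⟩
        have e : P ^ 2 - 1 = (P ^ 2 - (2 * K + 1) ^ 2) + ((2 * K + 1) ^ 2 - 1) := by ring
        rw [e]; exact dvd_add h1 h2
      · have h1 := hrev (4 * K - 1) ⟨2 * K - 1, by ring⟩ h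
        have h2 : 3 * (4 * K) ∣ (4 * K - 1) ^ 2 - 1 :=
          ⟨4 * m + 2, by linear_combination (16 * K) * hm⟩
        have e : P ^ 2 - 1 = (P ^ 2 - (4 * K - 1) ^ 2) + ((4 * K - 1) ^ 2 - 1) := by ring
        rw [e]; exact dvd_add h1 h2
end

section
/- Fix t ≥ 2 and define χ_t : ℤ → ℤ as the period-3·2^(t+1) function with χ_t(n) = 1 for n ≡ ±(2^(t+1)-3), χ_t(n) = -1 for n ≡ ±(2^(t+1)+3) (mod 3·2^(t+1)), and 0 otherwise. Let p be a prime with p ≡ r₁(t) or p ≡ r₂(t) (mod 3·2^(t+1)), where r₁(t) = 2^(t+1)-1 for t even, 2^(t+1)+1 for t odd, and r₂(t) = 2^(t+2)+1 for t even, 2^(t+2)-1 for t odd. Then for all integers m with χ_t(mp) ≠ 0, χ_t(mp) = -χ_t(m). -/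
/-- The periodic function `χ_t` of period `3·2^(t+1)`: it is `1` on the classes
`±(2^(t+1) - 3)`, `-1` on the classes `±(2^(t+1) + 3)`, and `0` otherwise. -/
def chi (t : ℕ) (n : ℤ) : ℤ :=
  if n % (3 * 2 ^ (t + 1)) = (2 ^ (t + 1) - 3 : ℤ) % (3 * 2 ^ (t + 1)) ∨
      n % (3 * 2 ^ (t + 1)) = (-(2 ^ (t + 1) - 3) : ℤ) % (3 * 2 ^ (t + 1)) then 1
  else if n % (3 * 2 ^ (t + 1)) = (2 ^ (t + 1) + 3 : ℤ) % (3 * 2 ^ (t + 1)) ∨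
      n % (3 * 2 ^ (t + 1)) = (-(2 ^ (t + 1) + 3) : ℤ) % (3 * 2 ^ (t + 1)) then -1
  else 0

lemma my_hA8 (t : ℕ) (ht : 2 ≤ t) : (8 : ℤ) ≤ 2 ^ (t + 1) := by
  calc (8:ℤ) = 2 ^ 3 := by norm_num
    _ ≤ 2 ^ (t + 1) := by
        apply pow_le_pow_right₀ (by norm_num)
        omega

lemma my_chi_eq_one (t : ℕ) (m : ℤ)
    (h : m % (3 * 2 ^ (t + 1)) = (2 ^ (t + 1) - 3 : ℤ) % (3 * 2 ^ (t + 1)) ∨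
      m % (3 * 2 ^ (t + 1)) = (-(2 ^ (t + 1) - 3) : ℤ) % (3 * 2 ^ (t + 1))) :
    chi t m = 1 := by
  unfold chi; rw [if_pos h]

lemma my_chi_eq_neg_one' (t : ℕ) (m : ℤ)
    (h1 : ¬(m % (3 * 2 ^ (t + 1)) = (2 ^ (t + 1) - 3 : ℤ) % (3 * 2 ^ (t + 1)) ∨
      m % (3 * 2 ^ (t + 1)) = (-(2 ^ (t + 1) - 3) : ℤ) % (3 * 2 ^ (t + 1))))
    (h2 : m % (3 * 2 ^ (t + 1)) = (2 ^ (t + 1) + 3 : ℤ) % (3 * 2 ^ (t + 1)) ∨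
      m % (3 * 2 ^ (t + 1)) = (-(2 ^ (t + 1) + 3) : ℤ) % (3 * 2 ^ (t + 1))) :
    chi t m = -1 := by
  unfold chi; rw [if_neg h1, if_pos h2]

lemma my_chi_eq_zero (t : ℕ) (m : ℤ)
    (h1 : ¬(m % (3 * 2 ^ (t + 1)) = (2 ^ (t + 1) - 3 : ℤ) % (3 * 2 ^ (t + 1)) ∨
      m % (3 * 2 ^ (t + 1)) = (-(2 ^ (t + 1) - 3) : ℤ) % (3 * 2 ^ (t + 1))))
    (h2 : ¬(m % (3 * 2 ^ (t + 1)) = (2 ^ (t + 1) + 3 : ℤ) % (3 * 2 ^ (t + 1)) ∨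
      m % (3 * 2 ^ (t + 1)) = (-(2 ^ (t + 1) + 3) : ℤ) % (3 * 2 ^ (t + 1)))) :
    chi t m = 0 := by
  unfold chi; rw [if_neg h1, if_neg h2]

lemma my_chi_eq_neg_one (t : ℕ) (ht : 2 ≤ t) (m : ℤ)
    (h : m ≡ 2 ^ (t + 1) + 3 [ZMOD (3 * 2 ^ (t + 1) : ℤ)] ∨
      m ≡ -(2 ^ (t + 1) + 3) [ZMOD (3 * 2 ^ (t + 1) : ℤ)]) :
    chi t m = -1 := by
  have hA := my_hA8 t ht
  have hnot : ¬(m ≡ 2 ^ (t + 1) - 3 [ZMOD (3 * 2 ^ (t + 1) : ℤ)] ∨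
      m ≡ -(2 ^ (t + 1) - 3) [ZMOD (3 * 2 ^ (t + 1) : ℤ)]) := by
    rintro (h1 | h1) <;> rcases h with h2 | h2
    · have hd := (h1.symm.trans h2).dvd
      rw [show ((2:ℤ) ^ (t + 1) + 3) - (2 ^ (t + 1) - 3) = 6 by ring] at hd
      have := Int.le_of_dvd (by norm_num) hd
      linarith
    · have hd := (h1.symm.trans h2).dvd
      rw [show (-((2:ℤ) ^ (t + 1) + 3)) - (2 ^ (t + 1) - 3) = -(2 * 2 ^ (t + 1)) by ring,
        dvd_neg] at hd
      have := Int.le_of_dvd (by positivity) hd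
      linarith
    · have hd := (h1.symm.trans h2).dvd
      rw [show ((2:ℤ) ^ (t + 1) + 3) - (-(2 ^ (t + 1) - 3)) = 2 * 2 ^ (t + 1) by ring] at hd
      have := Int.le_of_dvd (by positivity) hd
      linarith
    · have hd := (h1.symm.trans h2).dvd
      rw [show (-((2:ℤ) ^ (t + 1) + 3)) - (-(2 ^ (t + 1) - 3)) = -6 by ring, dvd_neg] at hd
      have := Int.le_of_dvd (by norm_num) hd
      linarith
  exact my_chi_eq_neg_one' t m hnot h

/-- Lemma 4.6, second case: if the prime `p` is `≡ r₁(t)` or `≡ r₂(t)` modulo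
`3·2^(t+1)`, then `χ_t(mp) = -χ_t(m)` for all `m` with `χ_t(mp) ≠ 0`. -/
theorem stmt_5 (t p : ℕ) (ht : 2 ≤ t) (hp : p.Prime)
    (hcong : (p : ℤ) ≡ (if Even t then 2 ^ (t + 1) - 1 else 2 ^ (t + 1) + 1)
        [ZMOD (3 * 2 ^ (t + 1) : ℤ)] ∨
      (p : ℤ) ≡ (if Even t then 2 ^ (t + 2) + 1 else 2 ^ (t + 2) - 1)
        [ZMOD (3 * 2 ^ (t + 1) : ℤ)]) :
    ∀ m : ℤ, chi t (m * p) ≠ 0 → chi t (m * p) = -chi t m := by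
  have hpar : (Even t ∧ ∃ k : ℤ, (2:ℤ) ^ (t + 1) = 3 * k + 2) ∨
      (¬Even t ∧ ∃ k : ℤ, (2:ℤ) ^ (t + 1) = 3 * k + 1) := by
    rcases Nat.even_or_odd t with he | ho
    · left
      refine ⟨he, ?_⟩
      obtain ⟨j, hj⟩ := he
      have h4 : (3:ℤ) ∣ 4 ^ j - 1 := by
        have := sub_dvd_pow_sub_pow (4:ℤ) 1 j
        simpa using this
      obtain ⟨c, hc⟩ := h4
      refine ⟨2 * c, ?_⟩
      rw [show t + 1 = 2 * j + 1 by omega, pow_succ, pow_mul]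
      have h4j : (4:ℤ) ^ j = 3 * c + 1 := by linarith
      norm_num [h4j]; ring
    · right
      refine ⟨Nat.not_even_iff_odd.mpr ho, ?_⟩
      obtain ⟨j, hj⟩ := ho
      have h4 : (3:ℤ) ∣ 4 ^ (j + 1) - 1 := by
        have := sub_dvd_pow_sub_pow (4:ℤ) 1 (j + 1)
        simpa using this
      obtain ⟨c, hc⟩ := h4
      refine ⟨c, ?_⟩
      rw [show t + 1 = 2 * (j + 1) by omega, pow_mul]
      norm_num
      linarith
  have hkey : ((p:ℤ) * (2 ^ (t + 1) - 3) ≡ 2 ^ (t + 1) + 3 [ZMOD (3 * 2 ^ (t + 1) : ℤ)] ∨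
        (p:ℤ) * (2 ^ (t + 1) - 3) ≡ -(2 ^ (t + 1) + 3) [ZMOD (3 * 2 ^ (t + 1) : ℤ)]) ∧
      ((p:ℤ) * (2 ^ (t + 1) + 3) ≡ 2 ^ (t + 1) - 3 [ZMOD (3 * 2 ^ (t + 1) : ℤ)] ∨
        (p:ℤ) * (2 ^ (t + 1) + 3) ≡ -(2 ^ (t + 1) - 3) [ZMOD (3 * 2 ^ (t + 1) : ℤ)]) ∧
      ((p:ℤ) * p ≡ 1 [ZMOD (3 * 2 ^ (t + 1) : ℤ)]) := by
    rcases hpar with ⟨he, k, hk⟩ | ⟨ho, k, hk⟩ <;> rcases hcong with hc | hc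
    · simp only [if_pos he] at hc
      refine ⟨Or.inl ?_, Or.inl ?_, ?_⟩
      · exact (hc.mul_right _).trans (Int.modEq_iff_dvd.mpr ⟨1 - k, by rw [hk]; ring⟩)
      · exact (hc.mul_right _).trans (Int.modEq_iff_dvd.mpr ⟨-(k + 1), by rw [hk]; ring⟩)
      · exact (hc.mul hc).trans (Int.modEq_iff_dvd.mpr ⟨-k, by rw [hk]; ring⟩)
    · simp only [if_pos he] at hc
      rw [show ((2:ℤ) ^ (t + 2)) = 2 * 2 ^ (t + 1) by ring] at hc
      refine ⟨Or.inr ?_, Or.inr ?_, ?_⟩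
      · exact (hc.mul_right _).trans (Int.modEq_iff_dvd.mpr ⟨-2 * k, by rw [hk]; ring⟩)
      · exact (hc.mul_right _).trans (Int.modEq_iff_dvd.mpr ⟨-2 * k - 4, by rw [hk]; ring⟩)
      · exact (hc.mul hc).trans (Int.modEq_iff_dvd.mpr ⟨-4 * k - 4, by rw [hk]; ring⟩)
    · simp only [if_neg ho] at hc
      refine ⟨Or.inr ?_, Or.inr ?_, ?_⟩
      · exact (hc.mul_right _).trans (Int.modEq_iff_dvd.mpr ⟨-k, by rw [hk]; ring⟩)
      · exact (hc.mul_right _).trans (Int.modEq_iff_dvd.mpr ⟨-k - 2, by rw [hk]; ring⟩)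
      · exact (hc.mul hc).trans (Int.modEq_iff_dvd.mpr ⟨-k - 1, by rw [hk]; ring⟩)
    · simp only [if_neg ho] at hc
      rw [show ((2:ℤ) ^ (t + 2)) = 2 * 2 ^ (t + 1) by ring] at hc
      refine ⟨Or.inl ?_, Or.inl ?_, ?_⟩
      · exact (hc.mul_right _).trans (Int.modEq_iff_dvd.mpr ⟨2 - 2 * k, by rw [hk]; ring⟩)
      · exact (hc.mul_right _).trans (Int.modEq_iff_dvd.mpr ⟨-2 * k - 2, by rw [hk]; ring⟩)
      · exact (hc.mul hc).trans (Int.modEq_iff_dvd.mpr ⟨-4 * k, by rw [hk]; ring⟩)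
  obtain ⟨hk1, hk2, hpp⟩ := hkey
  have step : ∀ x y m' : ℤ, (p:ℤ) * x ≡ y [ZMOD (3 * 2 ^ (t + 1) : ℤ)] →
      m' * (p:ℤ) ≡ x [ZMOD (3 * 2 ^ (t + 1) : ℤ)] → m' ≡ y [ZMOD (3 * 2 ^ (t + 1) : ℤ)] := by
    intro x y m' hxy hmx
    have h1 : m' ≡ m' * ((p:ℤ) * p) [ZMOD (3 * 2 ^ (t + 1) : ℤ)] := by
      simpa using (hpp.mul_left m').symm
    have h2 : m' * ((p:ℤ) * p) ≡ x * p [ZMOD (3 * 2 ^ (t + 1) : ℤ)] := by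
      have := hmx.mul_right (p:ℤ)
      rwa [mul_assoc] at this
    have h3 : x * (p:ℤ) ≡ y [ZMOD (3 * 2 ^ (t + 1) : ℤ)] := by
      rwa [mul_comm (p:ℤ) x] at hxy
    exact (h1.trans h2).trans h3
  intro m hm
  by_cases hc1 : (m * (p:ℤ) ≡ 2 ^ (t + 1) - 3 [ZMOD (3 * 2 ^ (t + 1) : ℤ)] ∨
      m * (p:ℤ) ≡ -(2 ^ (t + 1) - 3) [ZMOD (3 * 2 ^ (t + 1) : ℤ)])
  · have he1 : chi t (m * p) = 1 := my_chi_eq_one t _ hc1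
    have hmm : m ≡ 2 ^ (t + 1) + 3 [ZMOD (3 * 2 ^ (t + 1) : ℤ)] ∨
        m ≡ -(2 ^ (t + 1) + 3) [ZMOD (3 * 2 ^ (t + 1) : ℤ)] := by
      rcases hc1 with hx | hx
      · rcases hk1 with hk | hk
        · exact Or.inl (step _ _ _ hk hx)
        · exact Or.inr (step _ _ _ hk hx)
      · rcases hk1 with hk | hk
        · refine Or.inr (step _ _ _ ?_ hx)
          have := hk.neg
          rwa [← mul_neg] at this
        · refine Or.inl (step _ _ _ ?_ hx)
          have := hk.neg
          rw [← mul_neg] at this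
          rwa [neg_neg] at this
    have he2 : chi t m = -1 := my_chi_eq_neg_one t ht m hmm
    rw [he1, he2]; norm_num
  · by_cases hc2 : (m * (p:ℤ) ≡ 2 ^ (t + 1) + 3 [ZMOD (3 * 2 ^ (t + 1) : ℤ)] ∨
        m * (p:ℤ) ≡ -(2 ^ (t + 1) + 3) [ZMOD (3 * 2 ^ (t + 1) : ℤ)])
    · have he1 : chi t (m * p) = -1 := my_chi_eq_neg_one' t _ hc1 hc2
      have hmm : m ≡ 2 ^ (t + 1) - 3 [ZMOD (3 * 2 ^ (t + 1) : ℤ)] ∨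
          m ≡ -(2 ^ (t + 1) - 3) [ZMOD (3 * 2 ^ (t + 1) : ℤ)] := by
        rcases hc2 with hx | hx
        · rcases hk2 with hk | hk
          · exact Or.inl (step _ _ _ hk hx)
          · exact Or.inr (step _ _ _ hk hx)
        · rcases hk2 with hk | hk
          · refine Or.inr (step _ _ _ ?_ hx)
            have := hk.neg
            rwa [← mul_neg] at this
          · refine Or.inl (step _ _ _ ?_ hx)
            have := hk.neg
            rw [← mul_neg] at this
            rwa [neg_neg] at this
      have he2 : chi t m = 1 := my_chi_eq_one t _ hmm
      rw [he1, he2]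
    · exact absurd (my_chi_eq_zero t _ hc1 hc2) hm
end

section
/- Let p be a prime, a an integer, i ∈ {0, 1, ..., p-1}, and λ, m positive integers. If j is an integer with 0 < j < p - i, then the binomial coefficient C(pa + i, p^λ·m - j) is divisible by p^λ. -/
/-- Lemma 4.11: for a prime `p`, `0 ≤ i ≤ p - 1` and `0 < j < p - i`,
`p^λ` divides the binomial coefficient `C(pa + i, p^λ m - j)`. -/
theorem stmt_9 (p a i j m lam : ℕ) (hp : p.Prime) (hi : i ≤ p - 1)
    (hm : 0 < m) (hlam : 0 < lam) (hj0 : 0 < j) (hj : j < p - i) :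
    p ^ lam ∣ Nat.choose (p * a + i) (p ^ lam * m - j) := by
  have hp2 : 2 ≤ p := hp.two_le
  have hip : i < p := by omega
  have hjp : j < p := by omega
  set n := p * a + i with hn
  set k := p ^ lam * m - j with hk
  clear_value n k
  by_cases hkn : k ≤ n
  swap
  · rw [Nat.choose_eq_zero_of_lt (by omega)]
    exact dvd_zero _
  have hplam : p ≤ p ^ lam := by
    calc p = p ^ 1 := (pow_one p).symm
    _ ≤ p ^ lam := Nat.pow_le_pow_right (by omega) hlam
  have hjlm : j ≤ p ^ lam * m := by
    have : p ^ lam ≤ p ^ lam * m := Nat.le_mul_of_pos_right _ hm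
    omega
  have hkj : k + j = p ^ lam * m := by omega
  -- the carry condition for each 1 ≤ t ≤ lam
  have hcarry : ∀ t, 1 ≤ t → t ≤ lam → p ^ t ≤ k % p ^ t + (n - k) % p ^ t := by
    intro t ht1 htlam
    have hpt : p ≤ p ^ t := by
      calc p = p ^ 1 := (pow_one p).symm
      _ ≤ p ^ t := Nat.pow_le_pow_right (by omega) ht1
    have hptpos : 0 < p ^ t := by omega
    have hrlt : k % p ^ t < p ^ t := Nat.mod_lt _ hptpos
    -- k % p^t = p^t - j
    have hkmod : k % p ^ t + j = p ^ t := by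
      have hd : p ^ t ∣ k + j := by
        rw [hkj]; exact Dvd.dvd.mul_right (pow_dvd_pow p htlam) m
      have h1 : (k % p ^ t + j) % p ^ t = 0 := by
        have h2 := Nat.add_mod k j (p ^ t)
        rw [Nat.mod_eq_of_lt (by omega : j < p ^ t)] at h2
        rw [← h2]
        exact Nat.mod_eq_zero_of_dvd hd
      obtain ⟨c, hc⟩ := Nat.dvd_iff_mod_eq_zero.mpr h1
      have hlt : p ^ t * c < p ^ t * 2 := by rw [← hc]; omega
      have hc2 : c < 2 := Nat.lt_of_mul_lt_mul_left hlt
      have hc1 : c ≠ 0 := by rintro rfl; simp at hc; omega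
      have : c = 1 := by omega
      rw [this, mul_one] at hc
      omega
    by_contra hsum
    push_neg at hsum
    -- the two low parts sum to n % p^t
    have hsum' : k % p ^ t + (n - k) % p ^ t = n % p ^ t := by
      have h2 : (k % p ^ t + (n - k) % p ^ t) % p ^ t = n % p ^ t := by
        rw [← Nat.add_mod, Nat.add_sub_cancel' hkn]
      rw [← h2, Nat.mod_eq_of_lt hsum]
    -- so n % p^t ≥ p^t - j, but n % p^t ≡ i mod p, contradiction
    have hrj : p ^ t ≤ n % p ^ t + j := by
      generalize (n - k) % p ^ t = B at hsum hsum'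
      omega
    have hrmodp : n % p ^ t % p = i := by
      rw [Nat.mod_mod_of_dvd _ (dvd_pow_self p (by omega : t ≠ 0)), hn,
        Nat.mul_add_mod, Nat.mod_eq_of_lt hip]
    set r := n % p ^ t with hr
    set q := r / p with hqdef
    clear_value r q
    have hq : p * q + i = r := by
      rw [hqdef, ← hrmodp]
      exact Nat.div_add_mod r p
    obtain ⟨s, rfl⟩ : ∃ s, t = s + 1 := ⟨t - 1, by omega⟩
    have hps : p ^ (s + 1) = p * p ^ s := pow_succ' p s
    have h6 : p * p ^ s < p * (q + 1) := by
      have h7 : p * (q + 1) = p * q + p := by ring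
      omega
    have h7 : p ^ s ≤ q := by
      have := Nat.lt_of_mul_lt_mul_left h6
      omega
    have h8 : p * p ^ s ≤ p * q := Nat.mul_le_mul_left p h7
    have h9 : r < p ^ (s + 1) := by rw [hr]; exact Nat.mod_lt _ hptpos
    omega
  -- conclude via Kummer's theorem
  set b := max (Nat.log p n + 1) (lam + 1) with hb
  have hlogb : Nat.log p n < b := lt_of_lt_of_le (Nat.lt_succ_self _) (le_max_left _ _)
  have hmul := hp.emultiplicity_choose hkn hlogb
  have hsub : Finset.Ico 1 (lam + 1) ⊆
      Finset.filter (fun t => p ^ t ≤ k % p ^ t + (n - k) % p ^ t) (Finset.Ico 1 b) := by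
    intro t ht
    simp only [Finset.mem_Ico, Finset.mem_filter] at *
    exact ⟨⟨ht.1, lt_of_lt_of_le ht.2 (le_max_right _ _)⟩, hcarry t ht.1 (by omega)⟩
  have hcard : lam ≤
      (Finset.filter (fun t => p ^ t ≤ k % p ^ t + (n - k) % p ^ t) (Finset.Ico 1 b)).card := by
    have := Finset.card_le_card hsub
    simpa using this
  refine pow_dvd_of_le_emultiplicity ?_
  rw [hmul]
  exact_mod_cast Nat.cast_le.mpr hcard
end

section
/- Let p be a prime, j ∈ {1, ..., p-1}, and s, a integers with p^2·a + s ≥ 0. If the binomial coefficient C(s, p^2 - j) ≡ 0 (mod p), then for all positive integers m and λ, the binomial coefficient C(p^2·a + s, p^λ·m - j) ≡ 0 (mod p^(λ-1)). -/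
/-!
By Kummer's theorem, `v_p (C(n, k))` is the number of `i ≥ 1` with `n % p^i < k % p^i`.
If `s % p^2 ≥ p^2 - j`, then every base-`p` digit of `p^2 - j` (namely `p - j`, `p - 1`) is at
most the corresponding digit of `s`, so `p ∤ C(s, p^2 - j)`; hence the hypothesis gives
`s % p^2 < p^2 - j`. For `2 ≤ i ≤ λ` we have `(p^λ m - j) % p^i = p^i - j`, while
`n = p^2 a + s ≡ s (mod p^2)` forces `n % p^i < p^i - j`: this is `λ - 1` carries.
-/

open Finset

namespace Nat

lemma sub_mod_eq_sub_of_dvd {d P j : ℕ} (hd : d ∣ P) (hP : 0 < P) (hj : 0 < j) (hjd : j ≤ d) :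
    (P - j) % d = d - j := by
  obtain ⟨t, rfl⟩ := hd
  obtain ⟨t, rfl⟩ : ∃ t', t = t' + 1 := ⟨t - 1, by grind⟩
  have hsplit : d * (t + 1) - j = d * t + (d - j) := by rw [Nat.mul_succ]; omega
  rw [hsplit, Nat.mul_add_mod, Nat.mod_eq_of_lt (by omega)]

lemma sub_le_mod_of_dvd {d P j x : ℕ} (hd : d ∣ P) (hP : 0 < P) (hjd : j ≤ d)
    (h : P - j ≤ x % P) : d - j ≤ x % d := by
  have hxP : x % P < P := Nat.mod_lt x hP
  obtain ⟨i, hi0, hij, hx⟩ : ∃ i, 0 < i ∧ i ≤ j ∧ x % P = P - i :=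
    ⟨P - x % P, by omega, by omega, by omega⟩
  rw [← Nat.mod_mod_of_dvd x hd, hx, sub_mod_eq_sub_of_dvd hd hP hi0 (hij.trans hjd)]
  omega

lemma mod_le_mod_of_dvd (x : ℕ) {d P : ℕ} (hd : d ∣ P) : x % d ≤ x % P := by
  rw [← Nat.mod_mod_of_dvd x hd]
  exact Nat.mod_le _ _

/-- Adding `k` and `n - k` carries past the place `P` exactly when `n % P < k % P`. -/
lemma le_mod_add_sub_mod_iff {P n k : ℕ} (hP : 0 < P) (hkn : k ≤ n) :
    P ≤ k % P + (n - k) % P ↔ n % P < k % P := by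
  have hk : k % P < P := Nat.mod_lt _ hP
  have hnk : (n - k) % P < P := Nat.mod_lt _ hP
  have hsum : (k % P + (n - k) % P) % P = n % P := by
    rw [← Nat.add_mod, Nat.add_sub_cancel' hkn]
  rcases lt_or_ge (k % P + (n - k) % P) P with hc | hc
  · rw [Nat.mod_eq_of_lt hc] at hsum
    omega
  · rw [Nat.mod_eq_sub_mod hc, Nat.mod_eq_of_lt (by omega)] at hsum
    omega

theorem padicValNat_choose_eq_card_mod_lt {p n k b : ℕ} [Fact p.Prime] (hkn : k ≤ n)
    (hnb : log p n < b) :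
    padicValNat p (n.choose k) = #{i ∈ Ico 1 b | n % p ^ i < k % p ^ i} := by
  rw [padicValNat_choose hkn hnb]
  congr 1
  exact filter_congr fun i _ => le_mod_add_sub_mod_iff (pow_pos (Fact.out : p.Prime).pos i) hkn

lemma Prime.pow_dvd_choose_of_mod_lt {p n k a b : ℕ} (hp : p.Prime)
    (h : ∀ i ∈ Ioc a b, n % p ^ i < k % p ^ i) : p ^ (b - a) ∣ n.choose k := by
  have := Fact.mk hp
  rcases lt_or_ge n k with hnk | hkn
  · simp [Nat.choose_eq_zero_of_lt hnk]
  rw [padicValNat_dvd_iff_le (choose_ne_zero hkn),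
    padicValNat_choose_eq_card_mod_lt hkn
      (Nat.lt_succ_self _ |>.trans_le (le_max_left _ (b + 1))),
    ← Nat.card_Ioc a b]
  refine card_le_card fun i hi => ?_
  have hi' := mem_Ioc.1 hi
  exact mem_filter.2 ⟨mem_Ico.2 ⟨by omega, by omega⟩, h i hi⟩

lemma Prime.not_dvd_choose_of_mod_le {p n k : ℕ} (hp : p.Prime)
    (h : ∀ i, k % p ^ i ≤ n % p ^ i) : ¬ p ∣ n.choose k := by
  have := Fact.mk hp
  have hkn : k ≤ n := by
    have hk := h k
    rw [Nat.mod_eq_of_lt (Nat.lt_pow_self hp.one_lt)] at hk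
    exact hk.trans (Nat.mod_le _ _)
  rw [dvd_iff_padicValNat_ne_zero (choose_ne_zero hkn),
    padicValNat_choose_eq_card_mod_lt hkn (Nat.lt_succ_self _), not_not, Finset.card_eq_zero,
    filter_eq_empty_iff]
  exact fun i _ => (h i).not_gt

lemma Prime.mod_sq_lt_of_dvd_choose {p s j : ℕ} (hp : p.Prime) (hj : 0 < j) (hjp : j < p)
    (hdiv : p ∣ s.choose (p ^ 2 - j)) : s % p ^ 2 < p ^ 2 - j := by
  by_contra! hge
  have hp2 : p ≤ p ^ 2 := Nat.le_self_pow two_ne_zero p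
  refine hp.not_dvd_choose_of_mod_le (fun i => ?_) hdiv
  match i with
  | 0 => simp [Nat.mod_one]
  | 1 =>
    have hdvd : p ∣ p ^ 2 := dvd_pow_self p two_ne_zero
    rw [pow_one, Nat.sub_mod_eq_sub_of_dvd hdvd (by omega) hj hjp.le]
    exact Nat.sub_le_mod_of_dvd hdvd (by omega) hjp.le hge
  | i + 2 =>
    have hle : p ^ 2 ≤ p ^ (i + 2) := Nat.pow_le_pow_right hp.pos (by omega)
    rw [Nat.mod_eq_of_lt (by omega)]
    exact hge.trans (Nat.mod_le_mod_of_dvd s (pow_dvd_pow p (by omega)))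

end Nat

/-- Lemma 4.10 (combinatorial core): if `p` is prime, `1 ≤ j ≤ p - 1` and
`p ∣ C(s, p² - j)`, then `p^(λ-1) ∣ C(p²a + s, p^λ m - j)` for all positive
integers `m, λ`. -/
theorem stmt_10 (p s a j : ℕ) (hp : p.Prime) (hj1 : 1 ≤ j) (hj : j ≤ p - 1)
    (hdiv : p ∣ Nat.choose s (p ^ 2 - j)) :
    ∀ m lam : ℕ, 0 < m → 0 < lam →
      p ^ (lam - 1) ∣ Nat.choose (p ^ 2 * a + s) (p ^ lam * m - j) := by
  intro m lam hm _
  have hjp : j < p := by omega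
  have hs := hp.mod_sq_lt_of_dvd_choose hj1 hjp hdiv
  refine hp.pow_dvd_choose_of_mod_lt fun i hi => ?_
  obtain ⟨hi2, hilam⟩ := Finset.mem_Ioc.1 hi
  have hpi : 0 < p ^ i := pow_pos hp.pos i
  have hk : (p ^ lam * m - j) % p ^ i = p ^ i - j :=
    Nat.sub_mod_eq_sub_of_dvd ((pow_dvd_pow p hilam).mul_right m)
      (Nat.mul_pos (pow_pos hp.pos lam) hm) hj1 (hjp.le.trans (Nat.le_self_pow (by omega) p))
  rw [hk]
  by_contra! hn
  have hn2 := Nat.sub_le_mod_of_dvd (d := p ^ 2) (pow_dvd_pow p hi2) hpi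
    (hjp.le.trans (Nat.le_self_pow two_ne_zero p)) hn
  rw [Nat.mul_add_mod] at hn2
  omega
end

section
/- Let s₁(n, j, m) for 0 ≤ j ≤ n be defined by the polynomial identity ∑_{j=0}^{n} s₁(n, j, m) x^j = (x - m)(x - m + 1)···(x - m + n - 1). Then for any integers j, m with 0 ≤ j, the formal power series identity ∑_{n≥j} s₁(n, j, m)·q^n/n! = (1-q)^m·(-log(1-q))^j / j! holds. -/
open PowerSeries

/-- Generalized signless Stirling numbers of the first kind, defined by
`∑_{j=0}^n s₁(n,j,m) xʲ = (x-m)(x-m+1)⋯(x-m+n-1)`. -/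
noncomputable def s1 (n j : ℕ) (m : ℤ) : ℚ :=
  (∏ i ∈ Finset.range n, (Polynomial.X - Polynomial.C ((m : ℚ) - i))).coeff j

/-- The formal power series `-log(1-q) = ∑_{n≥1} qⁿ/n` over `ℚ`. -/
noncomputable def negLogOneSub : PowerSeries ℚ :=
  PowerSeries.mk fun n => if n = 0 then 0 else 1 / (n : ℚ)

/-! With `θ = (1 - q) d/dq`, both sides `F j` of the identity satisfy `θ F₀ = -m F₀`,
`θ F_{j+1} = -m F_{j+1} + F_j` and have constant term `[j = 0]`. These determine the `F j`:
if `θ H = c H` then `(n + 1) h_{n+1} = (n + c) h_n`, so `H = 0` as soon as `h₀ = 0`.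
For the generating function of `s₁` this system is the recurrence
`s₁(n+1, j+1, m) = s₁(n, j, m) + (n - m) s₁(n, j+1, m)`; for the right-hand side it follows from
`θ (1 - q) = -(1 - q)`, `θ (1 - q)⁻¹ = (1 - q)⁻¹` and `θ (-log (1 - q)) = 1`. -/

namespace Derivation

variable {R A : Type*} [CommSemiring R] [CommSemiring A] [Algebra R A] (D : Derivation R A A)
  {a b : A} {c d : R}

theorem map_mul_of_eq_smul (ha : D a = c • a) (hb : D b = d • b) :
    D (a * b) = (c + d) • (a * b) := by
  rw [leibniz, ha, hb, smul_eq_mul, smul_eq_mul, mul_smul_comm, mul_smul_comm, mul_comm b,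
    add_smul, add_comm]

theorem map_pow_of_eq_smul (ha : D a = c • a) (n : ℕ) : D (a ^ n) = (n * c) • a ^ n := by
  induction n with
  | zero => simp
  | succ n ih => rw [pow_succ, D.map_mul_of_eq_smul ih ha]; push_cast; ring_nf

end Derivation

namespace PowerSeries

variable {R K : Type*} [CommRing R] [Field K]

noncomputable def oneSubXDerivation : Derivation R R⟦X⟧ R⟦X⟧ :=
  (1 - X : R⟦X⟧) • d⁄dX R

theorem oneSubXDerivation_apply (f : R⟦X⟧) : oneSubXDerivation f = (1 - X) * d⁄dX R f := rfl

theorem coeff_oneSubXDerivation (f : R⟦X⟧) (n : ℕ) :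
    coeff n (oneSubXDerivation f) = (n + 1) * coeff (n + 1) f - n * coeff n f := by
  rw [oneSubXDerivation_apply, sub_mul, one_mul, map_sub]
  cases n with
  | zero => simp [coeff_derivative, mul_comm]
  | succ n => simp [coeff_succ_X_mul, coeff_derivative, mul_comm]

theorem eq_zero_of_oneSubXDerivation_eq_smul [CharZero K] {H : K⟦X⟧} {c : K}
    (hH : oneSubXDerivation H = c • H) (h0 : constantCoeff H = 0) : H = 0 := by
  ext n
  induction n with
  | zero => simpa using h0
  | succ n ih =>
    have hn := congrArg (coeff n) hH
    rw [coeff_oneSubXDerivation, coeff_smul, ih] at hn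
    simpa [Nat.cast_add_one_ne_zero] using hn

theorem oneSubXDerivation_one_sub_X :
    oneSubXDerivation (1 - X : R⟦X⟧) = (-1 : R) • (1 - X) := by
  simp [oneSubXDerivation_apply]

theorem oneSubXDerivation_inv_one_sub_X :
    oneSubXDerivation (1 - X : K⟦X⟧)⁻¹ = (1 : K) • (1 - X)⁻¹ := by
  have h : (1 - X : K⟦X⟧) * (1 - X)⁻¹ = 1 := PowerSeries.mul_inv_cancel _ (by simp)
  rw [oneSubXDerivation_apply, derivative_inv', one_smul]
  simp only [map_sub, Derivation.map_one_eq_zero, derivative_X, zero_sub, mul_neg, mul_one,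
    neg_neg]
  linear_combination (1 - X : K⟦X⟧)⁻¹ * h

theorem coeff_oneSubXDerivation_mk_div_factorial [CharZero K] (a : ℕ → K) (n : ℕ) :
    coeff n (oneSubXDerivation (mk fun n => a n / n.factorial)) =
      (a (n + 1) - n * a n) / n.factorial := by
  rw [coeff_oneSubXDerivation, coeff_mk, coeff_mk, Nat.factorial_succ]
  push_cast
  field_simp

theorem eq_of_oneSubXDerivation_recurrence [CharZero K] {F G : ℕ → K⟦X⟧} (c : K)
    (hF₀ : oneSubXDerivation (F 0) = c • F 0)
    (hF : ∀ j, oneSubXDerivation (F (j + 1)) = c • F (j + 1) + F j)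
    (hG₀ : oneSubXDerivation (G 0) = c • G 0)
    (hG : ∀ j, oneSubXDerivation (G (j + 1)) = c • G (j + 1) + G j)
    (h₀ : ∀ j, constantCoeff (F j) = constantCoeff (G j)) (j : ℕ) : F j = G j := by
  have of_eq_smul (j : ℕ) (h : oneSubXDerivation (F j - G j) = c • (F j - G j)) : F j = G j :=
    sub_eq_zero.mp (eq_zero_of_oneSubXDerivation_eq_smul h (by rw [map_sub, h₀, sub_self]))
  induction j with
  | zero => exact of_eq_smul 0 (by rw [map_sub, hF₀, hG₀, smul_sub])
  | succ j ih => exact of_eq_smul (j + 1) (by rw [map_sub, hF, hG, ih, smul_sub]; abel)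

theorem oneSubXDerivation_one_sub_X_pow_mul_inv_pow (m : ℤ) :
    oneSubXDerivation ((1 - X : K⟦X⟧) ^ m.toNat * (1 - X)⁻¹ ^ (-m).toNat) =
      (-m : K) • ((1 - X : K⟦X⟧) ^ m.toNat * (1 - X)⁻¹ ^ (-m).toNat) := by
  rw [oneSubXDerivation.map_mul_of_eq_smul
    (oneSubXDerivation.map_pow_of_eq_smul oneSubXDerivation_one_sub_X _)
    (oneSubXDerivation.map_pow_of_eq_smul oneSubXDerivation_inv_one_sub_X _)]
  congr 1
  have h := congrArg (Int.cast : ℤ → K) (Int.toNat_sub_toNat_neg m)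
  push_cast at h
  linear_combination -h

end PowerSeries

theorem s1_succ_zero (n : ℕ) (m : ℤ) : s1 (n + 1) 0 m = (n - m) * s1 n 0 m := by
  rw [s1, Finset.prod_range_succ, mul_sub, Polynomial.coeff_sub, Polynomial.coeff_mul_C,
    Polynomial.coeff_mul_X_zero, s1]
  ring

theorem s1_succ_succ (n j : ℕ) (m : ℤ) :
    s1 (n + 1) (j + 1) m = s1 n j m + (n - m) * s1 n (j + 1) m := by
  rw [s1, Finset.prod_range_succ, mul_sub, Polynomial.coeff_sub, Polynomial.coeff_mul_X,
    Polynomial.coeff_mul_C, s1, s1]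
  ring

theorem s1_zero (j : ℕ) (m : ℤ) : s1 0 j m = if j = 0 then 1 else 0 := by
  simp [s1, Polynomial.coeff_one]

noncomputable def s1EGF (j : ℕ) (m : ℤ) : ℚ⟦X⟧ := mk fun n => s1 n j m / n.factorial

theorem oneSubXDerivation_s1EGF_zero (m : ℤ) :
    oneSubXDerivation (s1EGF 0 m) = (-m : ℚ) • s1EGF 0 m := by
  ext n
  rw [s1EGF, coeff_oneSubXDerivation_mk_div_factorial, coeff_smul, coeff_mk, s1_succ_zero]
  ring

theorem oneSubXDerivation_s1EGF_succ (j : ℕ) (m : ℤ) :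
    oneSubXDerivation (s1EGF (j + 1) m) = (-m : ℚ) • s1EGF (j + 1) m + s1EGF j m := by
  ext n
  rw [s1EGF, s1EGF, coeff_oneSubXDerivation_mk_div_factorial, map_add, coeff_smul, coeff_mk,
    coeff_mk, s1_succ_succ]
  ring

theorem constantCoeff_s1EGF (j : ℕ) (m : ℤ) :
    constantCoeff (s1EGF j m) = if j = 0 then 1 else 0 := by
  rw [s1EGF, ← coeff_zero_eq_constantCoeff_apply, coeff_mk, s1_zero]
  simp

theorem natCast_mul_coeff_negLogOneSub (n : ℕ) :
    n * coeff n negLogOneSub = if n = 0 then 0 else 1 := by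
  rw [negLogOneSub, coeff_mk]
  split_ifs with hn
  · simp
  · field_simp

theorem oneSubXDerivation_negLogOneSub : oneSubXDerivation negLogOneSub = (1 : ℚ⟦X⟧) := by
  ext n
  rw [coeff_oneSubXDerivation, ← Nat.cast_succ, natCast_mul_coeff_negLogOneSub,
    natCast_mul_coeff_negLogOneSub, coeff_one]
  split_ifs <;> simp_all

theorem constantCoeff_negLogOneSub : constantCoeff negLogOneSub = 0 := by
  rw [negLogOneSub, ← coeff_zero_eq_constantCoeff_apply, coeff_mk, if_pos rfl]

theorem oneSubXDerivation_mul_negLogOneSub_pow {A : ℚ⟦X⟧} {c : ℚ}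
    (hA : oneSubXDerivation A = c • A) (j : ℕ) :
    oneSubXDerivation (A * negLogOneSub ^ (j + 1) * C (1 / ((j + 1).factorial : ℚ))) =
      c • (A * negLogOneSub ^ (j + 1) * C (1 / ((j + 1).factorial : ℚ))) +
        A * negLogOneSub ^ j * C (1 / (j.factorial : ℚ)) := by
  have hC : (C (1 / (j.factorial : ℚ)) : ℚ⟦X⟧) =
      ((j + 1 : ℕ) : ℚ⟦X⟧) * C (1 / ((j + 1).factorial : ℚ)) := by
    rw [← map_natCast (C (R := ℚ)), ← map_mul, Nat.factorial_succ]
    push_cast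
    field_simp
  rw [Derivation.leibniz, Derivation.leibniz, Derivation.leibniz_pow, hA,
    oneSubXDerivation_negLogOneSub, ← algebraMap_eq (R := ℚ), Derivation.map_algebraMap,
    algebraMap_eq, hC]
  simp only [smul_eq_mul, nsmul_eq_mul, Algebra.smul_def, algebraMap_eq, mul_zero, zero_add,
    Nat.add_sub_cancel, mul_one]
  push_cast
  ring

/-- `∑_{n≥j} s₁(n,j,m) qⁿ/n! = (1-q)^m (-log(1-q))^j / j!` as formal power
series over `ℚ`, where for `m ∈ ℤ` the series `(1-q)^m` is
`(1-q)^(m⁺) · ((1-q)⁻¹)^(m⁻)`.  (Note `s₁(n,j,m) = 0` for `n < j`.) -/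
theorem stmt_12 (j : ℕ) (m : ℤ) :
    (PowerSeries.mk fun n => s1 n j m / (n.factorial : ℚ)) =
      (1 - PowerSeries.X : PowerSeries ℚ) ^ m.toNat *
        ((1 - PowerSeries.X : PowerSeries ℚ)⁻¹) ^ (-m).toNat *
        negLogOneSub ^ j * PowerSeries.C (1 / (j.factorial : ℚ)) := by
  set A : ℚ⟦X⟧ := (1 - X) ^ m.toNat * (1 - X)⁻¹ ^ (-m).toNat
  have hA : oneSubXDerivation A = (-m : ℚ) • A := oneSubXDerivation_one_sub_X_pow_mul_inv_pow m
  have hA₀ : constantCoeff A = 1 := by simp [A, constantCoeff_inv]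
  refine eq_of_oneSubXDerivation_recurrence (-m : ℚ) (F := (s1EGF · m))
    (G := fun j => A * negLogOneSub ^ j * C (1 / (j.factorial : ℚ)))
    (oneSubXDerivation_s1EGF_zero m) (oneSubXDerivation_s1EGF_succ · m)
    (by simpa only [pow_zero, mul_one, Nat.factorial_zero, Nat.cast_one, div_one, map_one])
    (oneSubXDerivation_mul_negLogOneSub_pow hA) (fun j => ?_) j
  rw [constantCoeff_s1EGF]
  cases j <;> simp [hA₀, constantCoeff_negLogOneSub]
end

section
/- Let N be a positive integer, ζ_N a primitive N-th root of unity, and q a formal variable. For any n ≥ 0, the q-Pochhammer symbol (ζ_N - q; ζ_N - q)_{nN+i} = ∏_{k=1}^{nN+i} (1 - (ζ_N - q)^k), viewed as a power series in q, has order at least n (i.e., is O(q^n)). -/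
open Polynomial

/-- For `ζ_N` a primitive `N`-th root of unity and `0 ≤ i ≤ N-1`, the polynomial
`(ζ_N - q; ζ_N - q)_{nN+i} = ∏_{k=1}^{nN+i} (1 - (ζ_N - q)^k)` is `O(qⁿ)`,
i.e. divisible by `qⁿ` in `ℂ[q]`. -/
theorem stmt_13 (N : ℕ) (hN : 0 < N) (ζ : ℂ) (hζ : IsPrimitiveRoot ζ N)
    (i n : ℕ) (hi : i ≤ N - 1) :
    (Polynomial.X : ℂ[X]) ^ n ∣
      ∏ k ∈ Finset.Icc 1 (n * N + i), (1 - (Polynomial.C ζ - Polynomial.X) ^ k) := by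
  have hstep : ∀ j ∈ Finset.range n,
      (Polynomial.X : ℂ[X]) ∣ (1 - (Polynomial.C ζ - Polynomial.X) ^ (N * (j + 1))) := by
    intro j _
    have := (Polynomial.dvd_iff_isRoot (p := (1 - (Polynomial.C ζ - Polynomial.X) ^ (N * (j + 1)))) (a := (0 : ℂ)))
    rw [Polynomial.C_0, sub_zero] at this
    rw [this]
    simp [Polynomial.IsRoot, pow_mul, hζ.pow_eq_one]
  have hinj : Set.InjOn (fun j => N * (j + 1)) (Finset.range n) := by
    intro a _ b _ hab
    simpa [Nat.mul_left_cancel_iff hN] using hab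
  have h1 : (Polynomial.X : ℂ[X]) ^ n ∣
      ∏ k ∈ (Finset.range n).image (fun j => N * (j + 1)),
        (1 - (Polynomial.C ζ - Polynomial.X) ^ k) := by
    rw [Finset.prod_image (fun a ha b hb => hinj ha hb)]
    calc (Polynomial.X : ℂ[X]) ^ n = ∏ _j ∈ Finset.range n, Polynomial.X := by
          simp
      _ ∣ _ := Finset.prod_dvd_prod_of_dvd _ _ hstep
  refine h1.trans (Finset.prod_dvd_prod_of_subset _ _ _ ?_)
  intro k hk
  simp only [Finset.mem_image, Finset.mem_range] at hk
  obtain ⟨j, hj, rfl⟩ := hk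
  simp only [Finset.mem_Icc]
  constructor
  · exact Nat.one_le_iff_ne_zero.mpr (by positivity)
  · calc N * (j + 1) ≤ N * n := Nat.mul_le_mul_left N hj
      _ = n * N := Nat.mul_comm N n
      _ ≤ n * N + i := Nat.le_add_right _ _
end

section
/- Let p be a prime, k, r, λ, m positive integers with m ≥ λ, and ζ_k a primitive k-th root of unity. Then in the ring ℤ[ζ_k][[q]], the power series (1 - (ζ_k - q)^(k·r·p))^m is congruent modulo p^λ to a power series whose q-order is at least λ - 1 + p(m - λ - 1). -/
/-!
Since `ζ ^ k = 1`, the series `A = (ζ - q) ^ (k r)` is `1 + q B`, and by the binomial theorem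
`1 - A ^ p = p q f + q ^ p g`. Expanding the `m`-th power of this sum binomially, a term with at
least `λ` factors `p q f` is divisible by `p ^ λ`, while a term with `j < λ` such factors has
`q`-order at least `j + p (m - j) ≥ λ - 1 + p (m - λ + 1)`.
-/

open PowerSeries

namespace PowerSeries

variable {R : Type*} [CommRing R]

theorem exists_one_sub_pow_prime_eq {p : ℕ} (hp : p.Prime) {A : R⟦X⟧}
    (hA : constantCoeff A = 1) :
    ∃ f g : R⟦X⟧, 1 - A ^ p = C (p : R) * X * f + X ^ p * g := by
  obtain ⟨B, hB⟩ := X_dvd_iff.mpr (show constantCoeff (A - 1) = 0 by simp [hA])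
  obtain ⟨r, hr⟩ := exists_add_pow_prime_eq hp (X * B) 1
  refine ⟨-(B * r), -B ^ p, ?_⟩
  rw [show A = X * B + 1 by rw [← hB]; ring, hr, map_natCast]
  ring

theorem pow_dvd_coeff_pow_of_eq {c : R} {e m lam n : ℕ} {F f g : R⟦X⟧}
    (hF : F = C c * X * f + X ^ e * g) (he : 1 ≤ e)
    (hn : (n : ℤ) < lam - 1 + e * (m - lam + 1)) :
    c ^ lam ∣ coeff n (F ^ m) := by
  rw [hF, add_pow, map_sum]
  refine Finset.dvd_sum fun j hjmem => ?_
  have hjm : j ≤ m := Nat.lt_succ_iff.mp (Finset.mem_range.mp hjmem)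
  have hterm : (C c * X * f) ^ j * (X ^ e * g) ^ (m - j) * (m.choose j : R⟦X⟧) =
      C (c ^ j * m.choose j) * (X ^ (j + e * (m - j)) * (f ^ j * g ^ (m - j))) := by
    simp only [map_mul, map_pow, map_natCast]
    ring
  rw [hterm, coeff_C_mul, coeff_X_pow_mul']
  by_cases hj : lam ≤ j
  · exact ((pow_dvd_pow c hj).mul_right _).mul_right _
  · have horder : n < j + e * (m - j) := by
      -- `j + e (m - j)` exceeds the bound in `hn` by exactly `(λ - 1 - j) (e - 1)`.
      have hgap : (0 : ℤ) ≤ ((lam : ℤ) - 1 - j) * (e - 1) :=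
        mul_nonneg (by omega) (by omega)
      zify [hjm]
      nlinarith
    rw [if_neg (by omega), mul_zero]
    exact dvd_zero _

end PowerSeries

theorem stmt_14_general (R : Type*) [CommRing R] (p k r m lam : ℕ) (hp : p.Prime)
    (ζ : R) (hζ : IsPrimitiveRoot ζ k) :
    ∀ n : ℕ, (n : ℤ) < (lam : ℤ) - 1 + p * ((m : ℤ) - lam - 1) →
      (p : R) ^ lam ∣ PowerSeries.coeff (R := R) n
        ((1 - (PowerSeries.C (R := R) ζ - PowerSeries.X) ^ (k * r * p)) ^ m) := by
  intro n hn
  have hA : constantCoeff ((C ζ - X) ^ (k * r)) = 1 := by simp [pow_mul, hζ.pow_eq_one]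
  obtain ⟨f, g, hfg⟩ := exists_one_sub_pow_prime_eq hp hA
  refine pow_dvd_coeff_pow_of_eq (by rwa [pow_mul]) hp.one_le ?_
  linarith

/-- Lemma 4.8: in `R⟦q⟧` with `R = ℤ[ζ_k]` (formalized as any commutative ring
containing a primitive `k`-th root of unity `ζ`), for `m ≥ λ` the power series
`(1 - (ζ - q)^(krp))^m` is congruent modulo `p^λ` to a series of `q`-order at
least `λ - 1 + p(m - λ - 1)`; i.e. every coefficient of index below that bound
is divisible by `p^λ`. -/
theorem stmt_14 (R : Type*) [CommRing R] (p k r m lam : ℕ) (hp : p.Prime)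
    (hk : 0 < k) (hr : 0 < r) (hlam : 0 < lam) (hm : lam ≤ m)
    (ζ : R) (hζ : IsPrimitiveRoot ζ k) :
    ∀ n : ℕ, (n : ℤ) < (lam : ℤ) - 1 + p * ((m : ℤ) - lam - 1) →
      (p : R) ^ lam ∣ PowerSeries.coeff (R := R) n
        ((1 - (PowerSeries.C (R := R) ζ - PowerSeries.X) ^ (k * r * p)) ^ m) :=
  stmt_14_general R p k r m lam hp ζ hζ
end

section
/- Let p ≥ 5 be a prime, t ≥ 2, a = (2^(t+1)-3)^2, b = 3·2^(t+2), with p^2 ≡ 1 (mod b). Let i₀ be the least nonnegative residue mod p with b·i₀ ≡ -a (mod p), and let C = a(p^2-1)/b - p·⌊ap/b⌋. Then the base-p digit in position 1 of the p-adic expansion of the p-adic number -a/b ∈ ℤ_p equals (⌊ap/b⌋ + ⌊C/p⌋) mod p, and its digit in position 0 is i₀. -/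
/-! Since `b ∣ p² - 1`, we have `-a/b = a(p² - 1)/b - a·p²/b`, so `-a/b ≡ M := a(p² - 1)/b`
(mod `p²`) and the two lowest digits of `-a/b` are those of the natural number `M`.
The constant `C` is `M - p⌊ap/b⌋`, hence `⌊ap/b⌋ + ⌊C/p⌋ = ⌊M/p⌋`. -/

theorem Nat.coprime_of_intCast_dvd_pow_sub_one {p b k : ℕ} (hk : k ≠ 0)
    (h : (b : ℤ) ∣ (p : ℤ) ^ k - 1) : p.Coprime b := by
  have hcop : IsCoprime ((p : ℤ) ^ k - 1) p := IsCoprime.sub_one_left_of_dvd (dvd_pow_self _ hk)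
  exact Nat.isCoprime_iff_coprime.mp (hcop.of_isCoprime_of_dvd_left h).symm

namespace PadicInt

variable {p : ℕ} [Fact p.Prime]

theorem appr_eq_mod_of_pow_dvd_sub {x : ℤ_[p]} {n m : ℕ} (h : (p : ℤ_[p]) ^ n ∣ x - m) :
    x.appr n = m % p ^ n := by
  have : NeZero (p ^ n) := ⟨pow_ne_zero n (Fact.out : p.Prime).ne_zero⟩
  have hcongr : (x.appr n : ZMod (p ^ n)) = m :=
    zmod_congr_of_sub_mem_span n x _ _ (appr_spec n x) (Ideal.mem_span_singleton.mpr h)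
  simpa [ZMod.val_natCast, Nat.mod_eq_of_lt (appr_lt x n)] using congrArg ZMod.val hcongr

theorem appr_eq_mod_of_mul_eq_neg {x : ℤ_[p]} {a b m n : ℕ} (hb : p.Coprime b)
    (hx : (b : ℤ_[p]) * x = -a) (h : p ^ n ∣ b * m + a) : x.appr n = m % p ^ n := by
  apply appr_eq_mod_of_pow_dvd_sub
  have hunit : IsUnit (b : ℤ_[p]) := isUnit_iff.mpr (norm_natCast_eq_one_iff.mpr hb)
  have hmul : (b : ℤ_[p]) * (x - m) = -((b * m + a : ℕ) : ℤ_[p]) := by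
    push_cast
    rw [mul_sub, hx]
    ring
  rw [← hunit.dvd_mul_left, hmul, dvd_neg]
  exact_mod_cast Nat.cast_dvd_cast h

end PadicInt

theorem stmt_17_general (p : ℕ) [Fact p.Prime]
    (a b : ℕ)
    (hdvd : (b : ℤ) ∣ (p : ℤ) ^ 2 - 1)
    (i₀ : ℕ) (hi₀lt : i₀ < p) (hi₀ : (b : ℤ) * i₀ ≡ -(a : ℤ) [ZMOD (p : ℤ)])
    (C : ℤ) (hC : C = (a : ℤ) * ((p : ℤ) ^ 2 - 1) / b - p * ((a * p : ℤ) / b))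
    (x : ℤ_[p]) (hx : (b : ℤ_[p]) * x = -(a : ℤ_[p])) :
    x.appr 1 = i₀ ∧
      (x.appr 2 / p) % p = ((((a * p : ℤ) / b + Int.fdiv C p) % p)).toNat := by
  have hpb : p.Coprime b := Nat.coprime_of_intCast_dvd_pow_sub_one two_ne_zero hdvd
  have hp0 : 0 < p := (Fact.out : p.Prime).pos
  have hp2 : 1 ≤ p ^ 2 := Nat.one_le_pow _ _ hp0
  have hbd : b ∣ p ^ 2 - 1 := Int.natCast_dvd_natCast.mp (by push_cast [Nat.cast_sub hp2]; exact hdvd)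
  set M := a * (p ^ 2 - 1) / b with hM
  have hbM : b * M = a * (p ^ 2 - 1) := Nat.mul_div_cancel' (dvd_mul_of_dvd_right hbd a)
  refine ⟨?_, ?_⟩
  · have h : p ^ 1 ∣ b * i₀ + a := Int.natCast_dvd_natCast.mp (by simpa using hi₀.symm.dvd)
    rw [PadicInt.appr_eq_mod_of_mul_eq_neg hpb hx h, pow_one, Nat.mod_eq_of_lt hi₀lt]
  · have h : p ^ 2 ∣ b * M + a := ⟨a, by rw [hbM]; zify [hp2]; ring⟩
    have hCM : C = M + p * -((a * p / b : ℕ) : ℤ) := by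
      rw [hC, hM]
      push_cast [Int.natCast_ediv, Nat.cast_sub hp2]
      ring
    have hdigit : (a * p : ℤ) / b + Int.fdiv C p = ((M / p : ℕ) : ℤ) := by
      rw [Int.fdiv_eq_ediv_of_nonneg C (Int.natCast_nonneg p), hCM,
        Int.add_mul_ediv_left _ _ (by exact_mod_cast hp0.ne')]
      push_cast [Int.natCast_ediv]
      ring
    rw [PadicInt.appr_eq_mod_of_mul_eq_neg hpb hx h, hdigit, sq, Nat.mod_mul_right_div_self,
      Nat.mod_mod]
    exact_mod_cast (Int.toNat_natCast (M / p % p)).symm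

/-- Equation (5.25): with `a = (2^(t+1)-3)²`, `b = 3·2^(t+2)`, `p ≥ 5` prime with
`p² ≡ 1 (mod b)`, `i₀` the least nonnegative residue with `b·i₀ ≡ -a (mod p)`,
and `C = a(p²-1)/b - p⌊ap/b⌋`, the `p`-adic number `x = -a/b ∈ ℤ_p` has
`0`-th digit `i₀` and `1`-st digit `(⌊ap/b⌋ + ⌊C/p⌋) mod p`.  Digits are read
off from the approximations `x.appr n` (the residue of `x` mod `pⁿ`). -/
theorem stmt_17 (p t : ℕ) [Fact p.Prime] (hp5 : 5 ≤ p) (ht : 2 ≤ t)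
    (a b : ℕ) (ha : a = (2 ^ (t + 1) - 3) ^ 2) (hb : b = 3 * 2 ^ (t + 2))
    (hdvd : (b : ℤ) ∣ (p : ℤ) ^ 2 - 1)
    (i₀ : ℕ) (hi₀lt : i₀ < p) (hi₀ : (b : ℤ) * i₀ ≡ -(a : ℤ) [ZMOD (p : ℤ)])
    (C : ℤ) (hC : C = (a : ℤ) * ((p : ℤ) ^ 2 - 1) / b - p * ((a * p : ℤ) / b))
    (x : ℤ_[p]) (hx : (b : ℤ_[p]) * x = -(a : ℤ_[p])) :
    x.appr 1 = i₀ ∧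
      (x.appr 2 / p) % p = ((((a * p : ℤ) / b + Int.fdiv C p) % p)).toNat :=
  stmt_17_general p a b hdvd i₀ hi₀lt hi₀ C hC x hx
end
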